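/- Range-space characterization of trajectories: let (A,B,C,D) be a minimal controllable LTI system, let (u^d, y^d) be a trajectory of length T, and suppose u^d is persistently exciting of order N+n. Then the set of all trajectories (u,y) of length N of the system, viewed as vectors in ℝ^{mN} × ℝ^{pN}, equals the column space (range) of the stacked Hankel matrix [H_N(u^d); H_N(y^d)] ∈ ℝ^{(m+p)N×(T−N+1)}. -/

import Mathlib

open Matrix

/-- The block Hankel matrix of depth `N` of a signal `u` of length `T` with
values in `ℝ^m` (0-indexed: the `(i,k)` block is `u (i+k)` for
`i = 0,…,N-1`, `k = 0,…,T-N`). -/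
def hankelMatrix (m N T : ℕ) (u : ℕ → Fin m → ℝ) :
    Matrix (Fin N × Fin m) (Fin (T - N + 1)) ℝ :=
  fun ia k => u (ia.1.val + k.val) ia.2

/-- `(u, y)` is an input-output trajectory of length `N` of the LTI system
`(A, B, C, D)`. -/
def IsTrajectory (n m p N : ℕ) (A : Matrix (Fin n) (Fin n) ℝ)
    (B : Matrix (Fin n) (Fin m) ℝ) (C : Matrix (Fin p) (Fin n) ℝ)
    (D : Matrix (Fin p) (Fin m) ℝ)
    (u : ℕ → Fin m → ℝ) (y : ℕ → Fin p → ℝ) : Prop :=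
  ∃ x : ℕ → Fin n → ℝ,
    (∀ t, t + 1 < N → x (t + 1) = A.mulVec (x t) + B.mulVec (u t)) ∧
    (∀ t, t < N → y t = C.mulVec (x t) + D.mulVec (u t))

/-- The controllability matrix `[B, AB, …, A^{n-1}B]`. -/
def ctrbMatrix (n m : ℕ) (A : Matrix (Fin n) (Fin n) ℝ)
    (B : Matrix (Fin n) (Fin m) ℝ) : Matrix (Fin n) (Fin n × Fin m) ℝ :=
  fun i jk => (A ^ (jk.1 : ℕ) * B) i jk.2

/-- The observability matrix `[C; CA; …; CA^{K-1}]` of order `K`. -/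
def obsMatrix (n p K : ℕ) (A : Matrix (Fin n) (Fin n) ℝ)
    (C : Matrix (Fin p) (Fin n) ℝ) : Matrix (Fin K × Fin p) (Fin n) ℝ :=
  fun ip j => (C * A ^ (ip.1 : ℕ)) ip.2 j

/-!
Every column of `H_N(u^d)`, `H_N(y^d)` is a time-shifted window of the data trajectory, so by
linearity and time invariance every vector in the range is a trajectory. Conversely a trajectory
of length `N` is fixed by its initial state and its inputs, so it suffices that the stacked matrix
`[x^d(0) ⋯ x^d(T-N); H_N(u^d)]` has full row rank.

Let `(ξ, η)` annihilate it. Each functional `ξᵀAʲx^d(k)`, `j ≤ n`, is then a fixed linear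
functional of the input window `u^d(k), …, u^d(k+N+n-1)`, with coefficients the shifts of the
sequence `s = (ξᵀAⁿ⁻¹B, …, ξᵀB, η₀, …, η_{N-1}, 0, …)`. Cayley–Hamilton combines them into a
filter annihilating every input window of length `N + n`; by persistency of excitation that filter
is zero, i.e. `s` satisfies a monic linear recurrence. As `s` vanishes from `N + n` on, `s = 0`:
so `η = 0` and `ξᵀAᵏB = 0` for `k < n`, whence `ξ = 0` by controllability.
-/

open Finset

namespace Matrix

variable {K ι κ : Type*} [Field K] [Fintype ι] [Fintype κ] {M : Matrix ι κ K}

theorem eq_zero_of_vecMul_eq_zero_of_rank_eq_card (hM : M.rank = Fintype.card ι) {v : ι → K}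
    (hv : v ᵥ* M = 0) : v = 0 := by
  have hrows : LinearIndependent K M.row := by
    rw [linearIndependent_iff_card_eq_finrank_span, Set.finrank, ← rank_eq_finrank_span_row,
      hM]
  exact vecMul_injective_iff.mpr hrows (show v ᵥ* M = 0 ᵥ* M by rw [hv, zero_vecMul])

theorem mulVec_surjective_of_vecMul_eq_zero (hM : ∀ v, v ᵥ* M = 0 → v = 0) :
    Function.Surjective M.mulVec := by
  have hrows : LinearIndependent K M.row := vecMul_injective_iff.mp fun v w hvw =>
    sub_eq_zero.mp (hM _ (by rw [sub_vecMul]; exact sub_eq_zero.mpr hvw))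
  have hrange : LinearMap.range M.mulVecLin = ⊤ :=
    Submodule.eq_top_of_finrank_eq (by
      rw [Module.finrank_fintype_fun_eq_card, ← hrows.rank_matrix]; rfl)
  exact fun w => LinearMap.range_eq_top.mp hrange w

theorem sum_charpoly_coeff_smul_pow [DecidableEq ι] (A : Matrix ι ι K) :
    ∑ j ∈ range (Fintype.card ι + 1), A.charpoly.coeff j • A ^ j = 0 := by
  rw [← charpoly_natDegree_eq_dim A, ← Polynomial.aeval_eq_sum_range, aeval_self_charpoly]

end Matrix

theorem eq_zero_of_recurrence_of_tail_eq_zero {R M : Type*} [Semiring R] [AddCommMonoid M]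
    [Module R M] {s : ℕ → M} {c : ℕ → R} {d L : ℕ} (hc : c d = 1)
    (hrec : ∀ i < L, ∑ j ∈ range (d + 1), c j • s (i + d - j) = 0)
    (htail : ∀ i, L ≤ i → s i = 0) (i : ℕ) : s i = 0 := by
  suffices h : ∀ r i, L ≤ i + r → s i = 0 from h L i (by omega)
  intro r
  induction r with
  | zero => exact htail
  | succ r ih =>
    intro i hi
    rcases le_or_gt L i with hLi | hiL
    · exact htail i hLi
    have hlater : ∑ j ∈ range d, c j • s (i + d - j) = 0 :=
      sum_eq_zero fun j hj => by rw [ih _ (by grind), smul_zero]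
    simpa [sum_range_succ, hlater, hc] using hrec i hiL

section Dynamics

variable {R : Type*} [CommRing R] {n m : ℕ} {A : Matrix (Fin n) (Fin n) R}
  {B : Matrix (Fin n) (Fin m) R}

theorem vecMul_pow_succ_dotProduct {x x' : Fin n → R} {v : Fin m → R}
    (hx : x' = A *ᵥ x + B *ᵥ v) (ξ : Fin n → R) (j : ℕ) :
    (ξ ᵥ* A ^ (j + 1)) ⬝ᵥ x = (ξ ᵥ* A ^ j) ⬝ᵥ x' - (ξ ᵥ* (A ^ j * B)) ⬝ᵥ v := by
  rw [hx, dotProduct_add, pow_succ, ← vecMul_vecMul, ← vecMul_vecMul, dotProduct_mulVec,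
    dotProduct_mulVec]
  ring

-- The sequence `s` of the header: shifted by `n - j` it expresses `ξᵀAʲx(k)` through the inputs.
variable (A B) in
def inputFilter (ξ : Fin n → R) (η : ℕ → Fin m → R) (i : ℕ) : Fin m → R :=
  if i < n then ξ ᵥ* (A ^ (n - 1 - i) * B) else η (i - n)

theorem vecMul_pow_dotProduct_add_sum_inputFilter_eq_zero {T N : ℕ} {x : ℕ → Fin n → R}
    {u : ℕ → Fin m → R} (hdyn : ∀ k, k + 1 < T → x (k + 1) = A *ᵥ x k + B *ᵥ u k)
    (hN : 0 < N) {ξ : Fin n → R} {η : ℕ → Fin m → R} (hη : ∀ i, N ≤ i → η i = 0)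
    (hbase : ∀ k, k + N ≤ T → ξ ⬝ᵥ x k + ∑ i ∈ range N, η i ⬝ᵥ u (k + i) = 0)
    {j : ℕ} (hj : j ≤ n) {k : ℕ} (hk : k + j + N ≤ T) :
    (ξ ᵥ* A ^ j) ⬝ᵥ x k + ∑ i ∈ range (N + n), inputFilter A B ξ η (i + n - j) ⬝ᵥ u (k + i)
      = 0 := by
  induction j generalizing k with
  | zero =>
    have hshift (i : ℕ) : inputFilter A B ξ η (i + n) = η i := by simp [inputFilter]
    simp only [pow_zero, vecMul_one, Nat.sub_zero, hshift]
    have htail : ∑ i ∈ range n, η (N + i) ⬝ᵥ u (k + (N + i)) = 0 :=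
      sum_eq_zero fun i _ => by rw [hη (N + i) (by omega), zero_dotProduct]
    rw [sum_range_add, htail, add_zero]
    exact hbase k (by omega)
  | succ j ih =>
    have hnext := ih (by omega) (k := k + 1) (by omega)
    obtain ⟨L, hL⟩ : ∃ L, N + n = L + 1 := ⟨N + n - 1, by omega⟩
    have hlast : inputFilter A B ξ η (L + n - j) = 0 := by
      rw [inputFilter, if_neg (by omega), hη _ (by omega)]
    have hfirst : inputFilter A B ξ η (0 + n - (j + 1)) = ξ ᵥ* (A ^ j * B) := by
      rw [inputFilter, if_pos (by omega), show n - 1 - (0 + n - (j + 1)) = j by omega]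
    have hshift (i : ℕ) : inputFilter A B ξ η (i + 1 + n - (j + 1)) ⬝ᵥ u (k + (i + 1))
        = inputFilter A B ξ η (i + n - j) ⬝ᵥ u (k + 1 + i) := by
      rw [show i + 1 + n - (j + 1) = i + n - j by omega, show k + (i + 1) = k + 1 + i by omega]
    rw [hL, sum_range_succ, hlast, zero_dotProduct, add_zero] at hnext
    rw [vecMul_pow_succ_dotProduct (hdyn k (by omega)), hL, sum_range_succ', hfirst]
    simp only [hshift, Nat.add_zero]
    linear_combination hnext

end Dynamics

section Trajectories

variable {R : Type*} [CommSemiring R] {n m : ℕ} {A : Matrix (Fin n) (Fin n) R}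
  {B : Matrix (Fin n) (Fin m) R}

theorem state_eq_of_input_eq {N : ℕ} {x x' : ℕ → Fin n → R} {u u' : ℕ → Fin m → R}
    (hx : ∀ t, t + 1 < N → x (t + 1) = A *ᵥ x t + B *ᵥ u t)
    (hx' : ∀ t, t + 1 < N → x' (t + 1) = A *ᵥ x' t + B *ᵥ u' t)
    (h0 : x 0 = x' 0) (hu : ∀ t, t < N → u t = u' t) (t : ℕ) (ht : t < N) : x t = x' t := by
  induction t with
  | zero => exact h0
  | succ t ih => rw [hx t ht, hx' t ht, ih (by omega), hu t (by omega)]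

def hankelCombination {M : Type*} [AddCommMonoid M] [Module R M] {K : ℕ} (g : Fin K → R)
    (v : ℕ → M) (t : ℕ) : M :=
  ∑ k, g k • v (t + k)

theorem hankelCombination_eq_mulVec_add_mulVec {ι κ κ' : Type*} [Fintype κ] [Fintype κ']
    {M : Matrix ι κ R} {M' : Matrix ι κ' R} {z : ℕ → ι → R} {v : ℕ → κ → R}
    {w : ℕ → κ' → R} {S : ℕ} (h : ∀ t, t < S → z t = M *ᵥ v t + M' *ᵥ w t) {K : ℕ}
    (g : Fin K → R) {t : ℕ} (ht : t + K ≤ S) :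
    hankelCombination g z t
      = M *ᵥ hankelCombination g v t + M' *ᵥ hankelCombination g w t := by
  simp only [hankelCombination, mulVec_sum, mulVec_smul, ← sum_add_distrib, ← smul_add]
  exact sum_congr rfl fun k _ => by rw [h _ (by omega)]

end Trajectories

theorem hankelMatrix_mulVec_apply {m N T : ℕ} (u : ℕ → Fin m → ℝ)
    (g : Fin (T - N + 1) → ℝ) (t : Fin N) (a : Fin m) :
    (hankelMatrix m N T u *ᵥ g) (t, a) = hankelCombination g u t a := by
  simp [hankelMatrix, hankelCombination, mulVec, dotProduct, mul_comm]

theorem vecMul_hankelMatrix_apply {m L T : ℕ} (u w : ℕ → Fin m → ℝ) (k : Fin (T - L + 1)) :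
    ((fun ia : Fin L × Fin m => w ia.1 ia.2) ᵥ* hankelMatrix m L T u) k
      = ∑ i ∈ range L, w i ⬝ᵥ u (k + i) := by
  rw [← Fin.sum_univ_eq_sum_range (fun i => w i ⬝ᵥ u (k + i))]
  simp [hankelMatrix, vecMul, dotProduct, Fintype.sum_prod_type, add_comm]

section DataTrajectory

variable {n m p T : ℕ} {A : Matrix (Fin n) (Fin n) ℝ} {B : Matrix (Fin n) (Fin m) ℝ}
  {C : Matrix (Fin p) (Fin n) ℝ} {D : Matrix (Fin p) (Fin m) ℝ} {xd : ℕ → Fin n → ℝ}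
  {ud : ℕ → Fin m → ℝ} {yd : ℕ → Fin p → ℝ} {N : ℕ}

theorem hankelCombination_state (hxd : ∀ t, t + 1 < T → xd (t + 1) = A *ᵥ xd t + B *ᵥ ud t)
    (hNT : N ≤ T) (g : Fin (T - N + 1) → ℝ) (t : ℕ) (ht : t + 1 < N) :
    hankelCombination g xd (t + 1)
      = A *ᵥ hankelCombination g xd t + B *ᵥ hankelCombination g ud t := by
  have hnext :
      hankelCombination g xd (t + 1) = hankelCombination g (fun t => xd (t + 1)) t := by
    simp only [hankelCombination, add_right_comm]
  exact hnext.trans (hankelCombination_eq_mulVec_add_mulVec (S := T - 1)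
    (fun t ht => hxd t (by omega)) g (by omega))

theorem hankelCombination_output (hyd : ∀ t, t < T → yd t = C *ᵥ xd t + D *ᵥ ud t)
    (hNT : N ≤ T) (g : Fin (T - N + 1) → ℝ) {t : ℕ} (ht : t < N) :
    hankelCombination g yd t
      = C *ᵥ hankelCombination g xd t + D *ᵥ hankelCombination g ud t :=
  hankelCombination_eq_mulVec_add_mulVec hyd g (by omega)

end DataTrajectory

theorem eq_zero_of_sum_window_eq_zero_of_rank_hankelMatrix {m L T : ℕ} {u : ℕ → Fin m → ℝ}
    (hpe : (hankelMatrix m L T u).rank = m * L) (hLT : L ≤ T) {w : ℕ → Fin m → ℝ}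
    (hw : ∀ k, k + L ≤ T → ∑ i ∈ range L, w i ⬝ᵥ u (k + i) = 0) {i : ℕ} (hi : i < L) :
    w i = 0 := by
  have hW := Matrix.eq_zero_of_vecMul_eq_zero_of_rank_eq_card
    (by rw [hpe, Fintype.card_prod, Fintype.card_fin, Fintype.card_fin, mul_comm])
    (funext fun k => by rw [vecMul_hankelMatrix_apply]; exact hw k (by omega))
  exact funext fun a => congrFun hW (⟨i, hi⟩, a)

theorem eq_zero_of_dotProduct_state_add_sum_window_eq_zero {n m N T : ℕ}
    {A : Matrix (Fin n) (Fin n) ℝ} {B : Matrix (Fin n) (Fin m) ℝ} {x : ℕ → Fin n → ℝ}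
    {u : ℕ → Fin m → ℝ} (hctrb : (ctrbMatrix n m A B).rank = n)
    (hdyn : ∀ k, k + 1 < T → x (k + 1) = A *ᵥ x k + B *ᵥ u k) (hN : 0 < N) (hNnT : N + n ≤ T)
    (hpe : (hankelMatrix m (N + n) T u).rank = m * (N + n)) {ξ : Fin n → ℝ}
    {η : ℕ → Fin m → ℝ} (hη : ∀ i, N ≤ i → η i = 0)
    (hbase : ∀ k, k + N ≤ T → ξ ⬝ᵥ x k + ∑ i ∈ range N, η i ⬝ᵥ u (k + i) = 0) :
    ξ = 0 ∧ ∀ i, η i = 0 := by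
  set c : ℕ → ℝ := fun j => A.charpoly.coeff j
  set s := inputFilter A B ξ η
  have hstate (j : ℕ) (hj : j ≤ n) (k : ℕ) (hk : k + (N + n) ≤ T) :
      ∑ i ∈ range (N + n), s (i + n - j) ⬝ᵥ u (k + i) = -((ξ ᵥ* A ^ j) ⬝ᵥ x k) :=
    eq_neg_of_add_eq_zero_right
      (vecMul_pow_dotProduct_add_sum_inputFilter_eq_zero hdyn hN hη hbase hj (by omega))
  have hwindow (k : ℕ) (hk : k + (N + n) ≤ T) :
      ∑ i ∈ range (N + n), (∑ j ∈ range (n + 1), c j • s (i + n - j)) ⬝ᵥ u (k + i) = 0 := by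
    have hCH := congrArg (fun M => (ξ ᵥ* M) ⬝ᵥ x k) (Matrix.sum_charpoly_coeff_smul_pow A)
    simp only [Fintype.card_fin, vecMul_sum, vecMul_smul, sum_dotProduct, smul_dotProduct,
      vecMul_zero, zero_dotProduct] at hCH
    simp only [sum_dotProduct, smul_dotProduct]
    rw [sum_comm]
    simp only [← smul_sum]
    rw [sum_congr rfl fun j hj => by rw [hstate j (by grind) k hk]]
    simpa using hCH
  have hs (i : ℕ) : s i = 0 :=
    eq_zero_of_recurrence_of_tail_eq_zero (L := N + n)
      (by simpa [c, Fintype.card_fin] using (A.charpoly_monic).coeff_natDegree)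
      (fun i hi => eq_zero_of_sum_window_eq_zero_of_rank_hankelMatrix hpe hNnT hwindow hi)
      (fun i hi => by
        simp only [s, inputFilter, if_neg (show ¬ i < n by omega)]
        exact hη _ (by omega)) i
  refine ⟨Matrix.eq_zero_of_vecMul_eq_zero_of_rank_eq_card (by rw [hctrb, Fintype.card_fin])
    (funext fun ja => ?_), fun i => ?_⟩
  · have hj : n - 1 - ja.1 < n := by omega
    have hcol := congrFun (hs (n - 1 - ja.1)) ja.2
    simp only [s, inputFilter, if_pos hj] at hcol
    rw [show n - 1 - (n - 1 - ja.1) = ja.1 by omega] at hcol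
    exact hcol
  · simpa [s, inputFilter] using hs (i + n)

def stateInputHankelMatrix (n m N T : ℕ) (x : ℕ → Fin n → ℝ) (u : ℕ → Fin m → ℝ) :
    Matrix (Fin n ⊕ Fin N × Fin m) (Fin (T - N + 1)) ℝ :=
  fromRows (of fun i k => x k i) (hankelMatrix m N T u)

theorem stateInputHankelMatrix_mulVec {n m N T : ℕ} (x : ℕ → Fin n → ℝ) (u : ℕ → Fin m → ℝ)
    (g : Fin (T - N + 1) → ℝ) :
    stateInputHankelMatrix n m N T x u *ᵥ g
      = Sum.elim (hankelCombination g x 0) (hankelMatrix m N T u *ᵥ g) := by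
  rw [stateInputHankelMatrix, fromRows_mulVec]
  congr 1
  ext i
  simp [hankelCombination, mulVec, dotProduct, mul_comm]

-- The state row is `x(0), …, x(T - N)`; for `N = 0` its last entry `x(T)` is not a data state.
theorem stateInputHankelMatrix_mulVec_surjective {n m N T : ℕ} {A : Matrix (Fin n) (Fin n) ℝ}
    {B : Matrix (Fin n) (Fin m) ℝ} {x : ℕ → Fin n → ℝ} {u : ℕ → Fin m → ℝ}
    (hctrb : (ctrbMatrix n m A B).rank = n)
    (hdyn : ∀ k, k + 1 < T → x (k + 1) = A *ᵥ x k + B *ᵥ u k) (hN : 0 < N) (hNnT : N + n ≤ T)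
    (hpe : (hankelMatrix m (N + n) T u).rank = m * (N + n)) :
    Function.Surjective (stateInputHankelMatrix n m N T x u).mulVec := by
  refine Matrix.mulVec_surjective_of_vecMul_eq_zero fun v hv => ?_
  set η : ℕ → Fin m → ℝ := fun i a => if h : i < N then v (.inr (⟨i, h⟩, a)) else 0
  have hvη : v ∘ Sum.inr = fun ia => η ia.1 ia.2 := funext fun ia => by simp [η]
  have hbase (k : ℕ) (hk : k + N ≤ T) :
      (v ∘ Sum.inl) ⬝ᵥ x k + ∑ i ∈ range N, η i ⬝ᵥ u (k + i) = 0 := by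
    have hcol := congrFun hv ⟨k, by omega⟩
    rw [stateInputHankelMatrix, vecMul_fromRows, hvη, Pi.add_apply,
      vecMul_hankelMatrix_apply] at hcol
    simpa [vecMul, dotProduct] using hcol
  obtain ⟨hξ, hη⟩ := eq_zero_of_dotProduct_state_add_sum_window_eq_zero hctrb hdyn hN hNnT hpe
    (fun i hi => funext fun a => by simp [η, not_lt.mpr hi]) hbase
  ext (i | ia)
  · exact congrFun hξ i
  · simpa [hη] using congrFun hvη ia

theorem trajectory_range_space_general (n m p T N : ℕ)
    (A : Matrix (Fin n) (Fin n) ℝ) (B : Matrix (Fin n) (Fin m) ℝ)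
    (C : Matrix (Fin p) (Fin n) ℝ) (D : Matrix (Fin p) (Fin m) ℝ)
    (hctrb : (ctrbMatrix n m A B).rank = n)
    (ud : ℕ → Fin m → ℝ) (yd : ℕ → Fin p → ℝ)
    (hd : IsTrajectory n m p T A B C D ud yd)
    (hNnT : N + n ≤ T)
    (hpe : (hankelMatrix m (N + n) T ud).rank = m * (N + n)) :
    {w : (Fin N × Fin m → ℝ) × (Fin N × Fin p → ℝ) |
        ∃ u : ℕ → Fin m → ℝ, ∃ y : ℕ → Fin p → ℝ,
          IsTrajectory n m p N A B C D u y ∧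
          (∀ (t : Fin N) (a : Fin m), w.1 (t, a) = u t.val a) ∧
          (∀ (t : Fin N) (a : Fin p), w.2 (t, a) = y t.val a)} =
    {w : (Fin N × Fin m → ℝ) × (Fin N × Fin p → ℝ) |
        ∃ g : Fin (T - N + 1) → ℝ,
          (hankelMatrix m N T ud).mulVec g = w.1 ∧
          (hankelMatrix p N T yd).mulVec g = w.2} := by
  obtain ⟨xd, hxd, hyd⟩ := hd
  ext ⟨wu, wy⟩
  constructor
  · rintro ⟨u, y, ⟨x, hx, hy⟩, hwu, hwy⟩
    dsimp only at hwu hwy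
    rcases Nat.eq_zero_or_pos N with rfl | hN
    · exact ⟨0, Subsingleton.elim _ _, Subsingleton.elim _ _⟩
    -- Matching the initial state and the inputs forces the outputs to match too.
    obtain ⟨g, hg⟩ := stateInputHankelMatrix_mulVec_surjective hctrb hxd hN hNnT hpe
      (Sum.elim (x 0) wu)
    rw [stateInputHankelMatrix_mulVec, Sum.elim_eq_iff] at hg
    have hu (t : ℕ) (ht : t < N) : hankelCombination g ud t = u t := funext fun a => by
      rw [← hankelMatrix_mulVec_apply ud g ⟨t, ht⟩, hg.2, hwu]
    have hstate := state_eq_of_input_eq (hankelCombination_state hxd (by omega) g) hx hg.1 hu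
    refine ⟨g, hg.2, funext fun ⟨t, a⟩ => ?_⟩
    dsimp only
    rw [hankelMatrix_mulVec_apply, hwy, hy t t.isLt,
      hankelCombination_output hyd (by omega) g t.isLt, hstate t t.isLt, hu t t.isLt]
  · rintro ⟨g, rfl, rfl⟩
    exact ⟨_, _, ⟨_, hankelCombination_state hxd (by omega) g,
      fun t ht => hankelCombination_output hyd (by omega) g ht⟩,
      hankelMatrix_mulVec_apply ud g, hankelMatrix_mulVec_apply yd g⟩

/-- Range-space characterization of trajectories: for a minimal controllable
LTI system with data `(u^d, y^d)` of length `T` whose input is persistently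
exciting of order `N + n`, the set of all length-`N` trajectories `(u, y)`
(viewed as vectors in `ℝ^{mN} × ℝ^{pN}`) equals the range of the stacked
Hankel matrix `[H_N(u^d); H_N(y^d)]`. -/
theorem trajectory_range_space (n m p T N : ℕ)
    (A : Matrix (Fin n) (Fin n) ℝ) (B : Matrix (Fin n) (Fin m) ℝ)
    (C : Matrix (Fin p) (Fin n) ℝ) (D : Matrix (Fin p) (Fin m) ℝ)
    (hctrb : (ctrbMatrix n m A B).rank = n)
    (hobs : (obsMatrix n p n A C).rank = n)
    (ud : ℕ → Fin m → ℝ) (yd : ℕ → Fin p → ℝ)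
    (hd : IsTrajectory n m p T A B C D ud yd)
    (hNnT : N + n ≤ T)
    (hpe : (hankelMatrix m (N + n) T ud).rank = m * (N + n)) :
    {w : (Fin N × Fin m → ℝ) × (Fin N × Fin p → ℝ) |
        ∃ u : ℕ → Fin m → ℝ, ∃ y : ℕ → Fin p → ℝ,
          IsTrajectory n m p N A B C D u y ∧
          (∀ (t : Fin N) (a : Fin m), w.1 (t, a) = u t.val a) ∧
          (∀ (t : Fin N) (a : Fin p), w.2 (t, a) = y t.val a)} =
    {w : (Fin N × Fin m → ℝ) × (Fin N × Fin p → ℝ) |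
        ∃ g : Fin (T - N + 1) → ℝ,
          (hankelMatrix m N T ud).mulVec g = w.1 ∧
          (hankelMatrix p N T yd).mulVec g = w.2} :=
  trajectory_range_space_general n m p T N A B C D hctrb ud yd hd hNnT hpe
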